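/- Let D ⊂ ℂ be open and connected and let f : D → ℂ be holomorphic and injective. Define F : D × D → ℂ by F(x, ξ) = (f(x) − f(ξ))/(x − ξ) for x ≠ ξ and F(x, x) = f′(x). Then F is holomorphic on D × D (as a function of two complex variables) and F(x, ξ) ≠ 0 for all (x, ξ) ∈ D × D. -/

import Mathlib

/-!
Write `F` as `uncurry (dslope f)`. Away from the diagonal it is a quotient of analytic functions
with nonvanishing denominator. Near `(a, a)`, if `f (a + z) = ∑ cₙ zⁿ`, then
`F (a + x, a + y) = ∑ₙ (∑_{k ≤ n} yᵏ xⁿ⁻ᵏ) c_{n+1}`: this two-variable series is dominated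
termwise by the derivative series of `f`, telescopes to the divided difference off the diagonal and
sums to `f'` on it.

`F` vanishes nowhere off the diagonal by injectivity. If `f' a = 0`, let `g` be the inverse of
`f` on `D`: it is continuous because `f` is open, and holomorphic off `f a` by the inverse function
theorem, since the critical points of the nonconstant `f` are isolated. By the removable
singularity theorem `g` is holomorphic at `f a`, and differentiating `g ∘ f = id` at `a` gives
`1 = g' (f a) * 0`.
-/

open Set Filter Function FormalMultilinearSeries
open scoped Topology

section LeftInverse

variable {X Y : Type*} [TopologicalSpace X]

theorem not_eventually_eq_of_injOn {f : X → Y} {U : Set X} {a : X} [(𝓝[≠] a).NeBot]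
    (hU : U ∈ 𝓝 a) (hinj : InjOn f U) : ¬∀ᶠ x in 𝓝 a, f x = f a := by
  intro h
  obtain ⟨x, ⟨hfx, hxU⟩, hxa⟩ :=
    (((h.and hU).filter_mono nhdsWithin_le_nhds).and
      (self_mem_nhdsWithin : {a}ᶜ ∈ 𝓝[≠] a)).exists
  exact hxa (hinj hxU (mem_of_mem_nhds hU) hfx)

theorem continuousAt_of_leftInvOn [TopologicalSpace Y] {f : X → Y} {g : Y → X} {U : Set X}
    {a : X} (hU : U ∈ 𝓝 a) (hgf : LeftInvOn g f U) (hf : 𝓝 (f a) ≤ map f (𝓝 a)) :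
    ContinuousAt g (f a) := by
  rw [ContinuousAt, hgf (mem_of_mem_nhds hU)]
  exact (tendsto_map'_iff.2 <| tendsto_id.congr' <|
    eventuallyEq_of_mem hU fun x hx => (hgf hx).symm).mono_left hf

end LeftInverse

theorem AnalyticAt.eventually_deriv_ne_zero_of_injOn {𝕜 E : Type*} [NontriviallyNormedField 𝕜]
    [CharZero 𝕜] [NormedAddCommGroup E] [NormedSpace 𝕜 E] [CompleteSpace E]
    {f : 𝕜 → E} {U : Set 𝕜} {a : 𝕜} (hf : AnalyticAt 𝕜 f a) (hU : U ∈ 𝓝 a) (hinj : InjOn f U) :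
    ∀ᶠ z in 𝓝[≠] a, deriv f z ≠ 0 := by
  refine hf.deriv.eventually_eq_zero_or_eventually_ne_zero.resolve_left fun h => ?_
  have : analyticOrderAt (f · - f a) a = ⊤ := by
    rw [← hf.analyticOrderAt_deriv_add_one, analyticOrderAt_eq_top.2 h, top_add]
  refine not_eventually_eq_of_injOn hU hinj ?_
  simpa only [sub_eq_zero] using analyticOrderAt_eq_top.1 this

theorem AnalyticAt.nhds_le_map_nhds_of_injOn {f : ℂ → ℂ} {U : Set ℂ} {a : ℂ}
    (hf : AnalyticAt ℂ f a) (hU : U ∈ 𝓝 a) (hinj : InjOn f U) : 𝓝 (f a) ≤ map f (𝓝 a) :=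
  hf.eventually_constant_or_nhds_le_map_nhds.resolve_left (not_eventually_eq_of_injOn hU hinj)

theorem deriv_ne_zero_of_injOn {f : ℂ → ℂ} {U : Set ℂ} {a : ℂ} (hU : IsOpen U)
    (hf : DifferentiableOn ℂ f U) (hinj : InjOn f U) (ha : a ∈ U) : deriv f a ≠ 0 := by
  intro h0
  have hA := hf.analyticOnNhd hU
  set g := invFunOn f U
  have hgf : LeftInvOn g f U := hinj.leftInvOn_invFunOn
  have hopen : ∀ z ∈ U, 𝓝 (f z) ≤ map f (𝓝 z) := fun z hz =>
    (hA z hz).nhds_le_map_nhds_of_injOn (hU.mem_nhds hz) hinj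
  have hcont : ∀ z ∈ U, ContinuousAt g (f z) := fun z hz =>
    continuousAt_of_leftInvOn (hU.mem_nhds hz) hgf (hopen z hz)
  have hfg : ∀ z ∈ U, ∀ᶠ w in 𝓝 (f z), f (g w) = w := fun z hz =>
    mem_of_superset (hopen z hz (image_mem_map (hU.mem_nhds hz)))
      fun w hw => (surjOn_image f U).rightInvOn_invFunOn hw
  have hg_diff : ∀ z ∈ U, deriv f z ≠ 0 → DifferentiableAt ℂ g (f z) := fun z hz hz' => by
    have hfz : HasDerivAt f (deriv f z) (g (f z)) := by
      rw [hgf hz]; exact (hA z hz).differentiableAt.hasDerivAt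
    exact (hfz.of_local_left_inverse (hcont z hz) hz' (hfg z hz)).differentiableAt
  have hg_punctured : Tendsto g (𝓝[≠] (f a)) (𝓝[≠] a) := by
    have hga : Tendsto g (𝓝 (f a)) (𝓝 a) := by
      simpa only [ContinuousAt, hgf ha] using hcont a ha
    refine tendsto_nhdsWithin_of_tendsto_nhds_of_eventually_within _
      (hga.mono_left nhdsWithin_le_nhds) ?_
    filter_upwards [self_mem_nhdsWithin, nhdsWithin_le_nhds (hfg a ha)] with w hw hfw hgw
    exact hw (hfw ▸ congrArg f hgw)
  have hg : AnalyticAt ℂ g (f a) := by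
    refine Complex.analyticAt_of_differentiable_on_punctured_nhds_of_continuousAt ?_ (hcont a ha)
    filter_upwards [hg_punctured.eventually (((hA a ha).eventually_deriv_ne_zero_of_injOn
      (hU.mem_nhds ha) hinj).and (mem_nhdsWithin_of_mem_nhds (hU.mem_nhds ha))),
      nhdsWithin_le_nhds (hfg a ha)] with w ⟨hw', hwU⟩ hw
    rw [← hw]
    exact hg_diff _ hwU hw'
  have hcomp := hg.differentiableAt.hasDerivAt.comp a (hA a ha).differentiableAt.hasDerivAt
  rw [h0, mul_zero] at hcomp
  have hid : HasDerivAt (g ∘ f) 1 a :=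
    (hasDerivAt_id a).congr_of_eventuallyEq (eventuallyEq_of_mem (hU.mem_nhds ha) hgf)
  exact one_ne_zero (hid.unique hcomp)

theorem Fin.prod_ite_val_lt {M : Type*} [CommMonoid M] (x y : M) {k n : ℕ} (hk : k ≤ n) :
    ∏ i : Fin n, (if (i : ℕ) < k then y else x) = y ^ k * x ^ (n - k) := by
  obtain ⟨m, rfl⟩ := Nat.exists_eq_add_of_le hk
  rw [Fin.prod_univ_eq_prod_range (fun i => if i < k then y else x), Finset.prod_range_add]
  simp [Finset.prod_ite_of_true]

section DslopeSeries

variable {𝕜 E : Type*} [RCLike 𝕜] [NormedAddCommGroup E] [NormedSpace 𝕜 E]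

open ContinuousLinearMap in
/-- The power series of `uncurry (dslope f)` at `(a, a)` when `f (a + z) = ∑ zⁿ • c n`. -/
noncomputable def dslopeSeries (c : ℕ → E) : FormalMultilinearSeries 𝕜 (𝕜 × 𝕜) E := fun n =>
  ∑ k ∈ Finset.range (n + 1),
    (ContinuousMultilinearMap.mkPiRing 𝕜 (Fin n) (c (n + 1))).compContinuousLinearMap
      fun i => if (i : ℕ) < k then snd 𝕜 𝕜 𝕜 else fst 𝕜 𝕜 𝕜

theorem dslopeSeries_apply_diag (c : ℕ → E) (n : ℕ) (x y : 𝕜) :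
    dslopeSeries c n (fun _ => (x, y)) =
      (∑ k ∈ Finset.range (n + 1), y ^ k * x ^ (n - k)) • c (n + 1) := by
  simp only [dslopeSeries, sum_apply, ContinuousMultilinearMap.compContinuousLinearMap_apply,
    ContinuousMultilinearMap.mkPiRing_apply, Finset.sum_smul]
  refine Finset.sum_congr rfl fun k hk => ?_
  rw [← Fin.prod_ite_val_lt x y (Nat.lt_succ_iff.1 (Finset.mem_range.1 hk))]
  congr 1
  exact Finset.prod_congr rfl fun i _ => by split_ifs <;> rfl

theorem norm_dslopeSeries_le (c : ℕ → E) (n : ℕ) :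
    ‖dslopeSeries (𝕜 := 𝕜) c n‖ ≤ (n + 1) * ‖c (n + 1)‖ := by
  refine (norm_sum_le _ _).trans ?_
  calc _ ≤ ∑ _k ∈ Finset.range (n + 1), ‖c (n + 1)‖ := Finset.sum_le_sum fun k _ => by
        refine (ContinuousMultilinearMap.norm_compContinuousLinearMap_le _ _).trans ?_
        rw [ContinuousMultilinearMap.norm_mkPiRing]
        refine mul_le_of_le_one_right (norm_nonneg _) ?_
        refine Finset.prod_le_one (fun _ _ => norm_nonneg _) fun i _ => ?_
        split_ifs
        exacts [ContinuousLinearMap.norm_snd_le .., ContinuousLinearMap.norm_fst_le ..]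
    _ = (n + 1) * ‖c (n + 1)‖ := by simp

theorem radius_derivSeries_le_radius_dslopeSeries (p : FormalMultilinearSeries 𝕜 𝕜 E) :
    p.derivSeries.radius ≤ (dslopeSeries (𝕜 := 𝕜) p.coeff).radius :=
  radius_le_of_le fun n => calc
    ‖dslopeSeries p.coeff n‖ ≤ (n + 1) * ‖p.coeff (n + 1)‖ := norm_dslopeSeries_le _ _
    _ = ‖p.derivSeries.coeff n 1‖ := by
      rw [derivSeries_coeff_one, RCLike.norm_nsmul 𝕜]; simp
    _ ≤ ‖p.derivSeries.coeff n‖ := by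
      simpa using (p.derivSeries.coeff n).le_opNorm 1
    _ = ‖p.derivSeries n‖ := norm_apply_eq_norm_coef.symm

namespace HasFPowerSeriesOnBall

variable {f : 𝕜 → E} {p : FormalMultilinearSeries 𝕜 𝕜 E} {a : 𝕜} {r : ENNReal}

theorem hasSum_dslopeSeries_of_ne (hf : HasFPowerSeriesOnBall f p a r) {x y : 𝕜}
    (hx : x ∈ Metric.eball (0 : 𝕜) r) (hy : y ∈ Metric.eball (0 : 𝕜) r) (hyx : y ≠ x) :
    HasSum (fun n => dslopeSeries p.coeff n fun _ => (x, y)) (dslope f (a + x) (a + y)) := by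
  have hsum : HasSum (fun n => y ^ n • p.coeff n - x ^ n • p.coeff n) (f (a + y) - f (a + x)) := by
    simpa only [apply_eq_pow_smul_coeff] using (hf.hasSum hy).sub (hf.hasSum hx)
  have hshift := (hasSum_nat_add_iff' 1).2 hsum
  simp only [Finset.range_one, Finset.sum_singleton, pow_zero, sub_self, sub_zero] at hshift
  rw [dslope_of_ne _ (by simpa using hyx), slope_def_module, add_sub_add_left_eq_sub]
  convert hshift.const_smul (y - x)⁻¹ using 1
  funext n
  have hgeom := geom_sum₂_mul y x (n + 1)
  simp only [add_tsub_cancel_right] at hgeom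
  rw [dslopeSeries_apply_diag, ← sub_smul, smul_smul, ← hgeom, mul_comm _ (y - x),
    inv_mul_cancel_left₀ (sub_ne_zero.2 hyx)]

theorem hasSum_dslopeSeries_same [CompleteSpace E] (hf : HasFPowerSeriesOnBall f p a r) {x : 𝕜}
    (hx : x ∈ Metric.eball (0 : 𝕜) r) :
    HasSum (fun n => dslopeSeries p.coeff n fun _ => (x, x)) (dslope f (a + x) (a + x)) := by
  rw [dslope_same, ← fderiv_apply_one_eq_deriv]
  convert (hf.fderiv.hasSum hx).mapL (ContinuousLinearMap.apply 𝕜 E 1) using 1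
  funext n
  have hpow : ∀ k ∈ Finset.range (n + 1), x ^ k * x ^ (n - k) = x ^ n := fun k hk =>
    pow_mul_pow_sub x (Nat.lt_succ_iff.1 (Finset.mem_range.1 hk))
  rw [dslopeSeries_apply_diag, Finset.sum_congr rfl hpow, apply_eq_pow_smul_coeff]
  · simp [mul_smul, ← Nat.cast_smul_eq_nsmul 𝕜, smul_comm (x ^ n)]
  · rfl

protected theorem uncurry_dslope [CompleteSpace E] (hf : HasFPowerSeriesOnBall f p a r) :
    HasFPowerSeriesOnBall (uncurry (dslope f)) (dslopeSeries p.coeff) (a, a) r where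
  r_le := hf.r_le.trans <|
    p.radius_le_radius_derivSeries.trans (radius_derivSeries_le_radius_dslopeSeries p)
  r_pos := hf.r_pos
  hasSum {z} hz := by
    obtain ⟨x, y⟩ := z
    have hx : x ∈ Metric.eball (0 : 𝕜) r :=
      Metric.mem_eball.2 ((le_max_left _ _).trans_lt (Metric.mem_eball.1 hz))
    have hy : y ∈ Metric.eball (0 : 𝕜) r :=
      Metric.mem_eball.2 ((le_max_right _ _).trans_lt (Metric.mem_eball.1 hz))
    rcases eq_or_ne y x with rfl | hyx
    · exact hf.hasSum_dslopeSeries_same hx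
    · exact hf.hasSum_dslopeSeries_of_ne hx hy hyx

end HasFPowerSeriesOnBall

end DslopeSeries

theorem analyticAt_uncurry_dslope_of_ne {𝕜 E : Type*} [NontriviallyNormedField 𝕜]
    [NormedAddCommGroup E] [NormedSpace 𝕜 E] {f : 𝕜 → E} {x y : 𝕜}
    (hx : AnalyticAt 𝕜 f x) (hy : AnalyticAt 𝕜 f y) (hxy : x ≠ y) :
    AnalyticAt 𝕜 (uncurry (dslope f)) (x, y) := by
  have hquot : AnalyticAt 𝕜 (fun z : 𝕜 × 𝕜 => (z.2 - z.1)⁻¹ • (f z.2 - f z.1)) (x, y) :=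
    ((analyticAt_snd.sub analyticAt_fst).inv (sub_ne_zero.2 hxy.symm)).smul
      ((hy.comp analyticAt_snd).sub (hx.comp analyticAt_fst))
  refine hquot.congr ?_
  filter_upwards [(isOpen_ne_fun continuous_fst continuous_snd).mem_nhds hxy] with z hz
  rw [uncurry_apply_pair, dslope_of_ne _ (Ne.symm hz), slope_def_module]

theorem AnalyticAt.uncurry_dslope_diag {𝕜 E : Type*} [RCLike 𝕜] [NormedAddCommGroup E]
    [NormedSpace 𝕜 E] [CompleteSpace E] {f : 𝕜 → E} {a : 𝕜} (hf : AnalyticAt 𝕜 f a) :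
    AnalyticAt 𝕜 (uncurry (dslope f)) (a, a) :=
  let ⟨_, _, hp⟩ := hf
  hp.uncurry_dslope.analyticAt

theorem AnalyticOnNhd.uncurry_dslope {𝕜 E : Type*} [RCLike 𝕜] [NormedAddCommGroup E]
    [NormedSpace 𝕜 E] [CompleteSpace E] {f : 𝕜 → E} {U : Set 𝕜} (hf : AnalyticOnNhd 𝕜 f U) :
    AnalyticOnNhd 𝕜 (uncurry (dslope f)) (U ×ˢ U) := by
  rintro ⟨x, y⟩ ⟨hx, hy⟩
  rcases eq_or_ne x y with rfl | hxy
  · exact (hf x hx).uncurry_dslope_diag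
  · exact analyticAt_uncurry_dslope_of_ne (hf x hx) (hf y hy) hxy

theorem dslope_ne_zero_of_injOn {f : ℂ → ℂ} {U : Set ℂ} {x y : ℂ} (hU : IsOpen U)
    (hf : DifferentiableOn ℂ f U) (hinj : InjOn f U) (hx : x ∈ U) (hy : y ∈ U) :
    dslope f x y ≠ 0 := by
  rcases eq_or_ne y x with rfl | hyx
  · rw [dslope_same]
    exact deriv_ne_zero_of_injOn hU hf hinj hy
  · rw [dslope_of_ne _ hyx, slope_def_field]
    exact div_ne_zero (sub_ne_zero.2 fun h => hyx (hinj hy hx h)) (sub_ne_zero.2 hyx)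

open Complex Classical

theorem divided_difference_holomorphic_nonvanishing_general
    (D : Set ℂ) (hD : IsOpen D)
    (f : ℂ → ℂ) (hf : DifferentiableOn ℂ f D) (hinj : Set.InjOn f D)
    (F : ℂ × ℂ → ℂ)
    (hF : ∀ p : ℂ × ℂ, F p = if p.1 = p.2 then deriv f p.1 else (f p.1 - f p.2) / (p.1 - p.2)) :
    AnalyticOnNhd ℂ F (D ×ˢ D) ∧ ∀ p ∈ D ×ˢ D, F p ≠ 0 := by
  obtain rfl : F = uncurry (dslope f) := by
    funext ⟨x, y⟩
    rw [hF]
    rcases eq_or_ne x y with rfl | hxy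
    · simp [dslope_same]
    · rw [if_neg hxy, uncurry_apply_pair, dslope_of_ne _ hxy.symm, slope_def_field,
        ← neg_sub x, ← neg_sub (f x), neg_div_neg_eq]
  exact ⟨(hf.analyticOnNhd hD).uncurry_dslope,
    fun p hp => dslope_ne_zero_of_injOn hD hf hinj hp.1 hp.2⟩

/-- For `f` holomorphic and injective on an open connected `D ⊂ ℂ`, the divided-difference
function `F(x,ξ) = (f(x)-f(ξ))/(x-ξ)` for `x ≠ ξ`, `F(x,x) = f'(x)`, is holomorphic on
`D × D` and nowhere vanishing on `D × D`. -/
theorem divided_difference_holomorphic_nonvanishing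
    (D : Set ℂ) (hD : IsOpen D) (hDconn : IsConnected D)
    (f : ℂ → ℂ) (hf : DifferentiableOn ℂ f D) (hinj : Set.InjOn f D)
    (F : ℂ × ℂ → ℂ)
    (hF : ∀ p : ℂ × ℂ, F p = if p.1 = p.2 then deriv f p.1 else (f p.1 - f p.2) / (p.1 - p.2)) :
    AnalyticOnNhd ℂ F (D ×ˢ D) ∧ ∀ p ∈ D ×ˢ D, F p ≠ 0 :=
  divided_difference_holomorphic_nonvanishing_general D hD f hf hinj F hF
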